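/- arXiv:1901.01779 — 3 statements merged into one kernel-verified Lean document; each statement's English description precedes it below -/
import Mathlib

section
/- The annihilator of R = R_n(K,J) equals Ann_K(J)·e_{n,1}, i.e., {α ∈ R : αR = Rα = 0} = {a e_{n,1} : a ∈ K, aJ = Ja = 0}. -/
/-- Membership in `R = R_n(K,J)`: entries on and above the main diagonal lie in `J`. -/
def Rmem {K : Type*} [Ring K] {n : ℕ} (J : AddSubgroup K)
    (M : Matrix (Fin n) (Fin n) K) : Prop :=
  ∀ i j : Fin n, i ≤ j → M i j ∈ J

/-!
Testing an annihilator `M` against matrix units shows that it is concentrated in the corner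
`(n, 1)`: right multiplication by `e_{k,j}` with `j < k` (a matrix unit of `R`) moves column `k`
of `M` into column `j`, so every column but the first vanishes, and left multiplication by
`e_{k,l}` with `l < k` likewise kills every row but the last. Testing the corner entry `a`
against `e_{1,1} y` and `e_{n,n} y` with `y ∈ J` gives `aJ = Ja = 0`. Conversely `a e_{n,1}`
only meets the first row of a matrix on the right and its last column on the left, and these
entries lie in `J`.
-/

theorem Matrix.eq_single_of_apply_eq_zero {m n α : Type*} [DecidableEq m] [DecidableEq n]
    [Zero α] {M : Matrix m n α} {i₀ : m} {j₀ : n}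
    (hrow : ∀ i j, i ≠ i₀ → M i j = 0) (hcol : ∀ i j, j ≠ j₀ → M i j = 0) :
    M = Matrix.single i₀ j₀ (M i₀ j₀) := by
  ext i j
  rw [Matrix.single_apply]
  split_ifs with h
  · obtain ⟨rfl, rfl⟩ := h
    rfl
  · rcases not_and_or.1 h with hi | hj
    · exact hrow i j (Ne.symm hi)
    · exact hcol i j (Ne.symm hj)

section

variable {K : Type*} [Ring K] {n : ℕ} {J : AddSubgroup K}

theorem rmem_single_iff {i j : Fin n} {c : K} :
    Rmem J (Matrix.single i j c) ↔ (i ≤ j → c ∈ J) := by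
  refine ⟨fun h hij => by simpa using h i j hij, fun h k l hkl => ?_⟩
  rw [Matrix.single_apply]
  split_ifs with hik
  · obtain ⟨rfl, rfl⟩ := hik
    exact h hkl
  · exact J.zero_mem

theorem col_eq_zero_of_mul_eq_zero {M : Matrix (Fin n) (Fin n) K}
    (hM : ∀ X, Rmem J X → M * X = 0) (i : Fin n) {j k : Fin n} (hjk : j < k) :
    M i k = 0 := by
  have := congrFun₂ (hM (Matrix.single k j 1) (rmem_single_iff.2 fun hkj =>
    absurd hkj (not_le.2 hjk))) i j
  simpa [Matrix.mul_single_apply_same] using this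

theorem row_eq_zero_of_mul_eq_zero {M : Matrix (Fin n) (Fin n) K}
    (hM : ∀ X, Rmem J X → X * M = 0) {l k : Fin n} (hlk : l < k) (j : Fin n) :
    M l j = 0 := by
  have := congrFun₂ (hM (Matrix.single k l 1) (rmem_single_iff.2 fun hkl =>
    absurd hkl (not_le.2 hlk))) k j
  simpa [Matrix.single_mul_apply_same] using this

theorem apply_mul_eq_zero_of_mul_eq_zero {M : Matrix (Fin n) (Fin n) K}
    (hM : ∀ X, Rmem J X → M * X = 0) (i j : Fin n) {y : K} (hy : y ∈ J) :
    M i j * y = 0 := by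
  have := congrFun₂ (hM (Matrix.single j j y) (rmem_single_iff.2 fun _ => hy)) i j
  simpa [Matrix.mul_single_apply_same] using this

theorem mul_apply_eq_zero_of_mul_eq_zero {M : Matrix (Fin n) (Fin n) K}
    (hM : ∀ X, Rmem J X → X * M = 0) (i j : Fin n) {y : K} (hy : y ∈ J) :
    y * M i j = 0 := by
  have := congrFun₂ (hM (Matrix.single i i y) (rmem_single_iff.2 fun _ => hy)) i j
  simpa [Matrix.single_mul_apply_same] using this

theorem single_mul_eq_zero_of_rmem {i j : Fin n} {a : K} {X : Matrix (Fin n) (Fin n) K}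
    (hj : ∀ k, j ≤ k) (ha : ∀ y ∈ J, a * y = 0) (hX : Rmem J X) :
    Matrix.single i j a * X = 0 := by
  ext r k
  by_cases hr : r = i
  · subst hr
    simp [Matrix.single_mul_apply_same, ha _ (hX j k (hj k))]
  · simp [Matrix.single_mul_apply_of_ne _ _ _ _ _ hr]

theorem mul_single_eq_zero_of_rmem {i j : Fin n} {a : K} {X : Matrix (Fin n) (Fin n) K}
    (hi : ∀ k, k ≤ i) (ha : ∀ y ∈ J, y * a = 0) (hX : Rmem J X) :
    X * Matrix.single i j a = 0 := by
  ext r k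
  by_cases hk : k = j
  · subst hk
    simp [Matrix.mul_single_apply_same, ha _ (hX r i (hi r))]
  · simp [Matrix.mul_single_apply_of_ne _ _ _ _ _ hk]

end

/-- The annihilator of `R = R_n(K,J)` equals `Ann_K(J) · e_{n,1}`. -/
theorem annihilator_of_R {K : Type*} [Ring K] {n : ℕ} (hn : 3 ≤ n)
    (J : AddSubgroup K) :
    ∀ M : Matrix (Fin n) (Fin n) K,
      (Rmem J M ∧ ∀ X : Matrix (Fin n) (Fin n) K, Rmem J X → M * X = 0 ∧ X * M = 0) ↔
      ∃ a : K, (∀ y ∈ J, a * y = 0 ∧ y * a = 0) ∧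
        M = Matrix.single ⟨n - 1, by omega⟩ ⟨0, by omega⟩ a := by
  intro M
  set last : Fin n := ⟨n - 1, by omega⟩
  set first : Fin n := ⟨0, by omega⟩
  have first_le (k : Fin n) : first ≤ k := Nat.zero_le _
  have le_last (k : Fin n) : k ≤ last := Fin.le_def.2 (by change (k : ℕ) ≤ n - 1; omega)
  have first_lt_last : first < last := Fin.lt_def.2 (by change 0 < n - 1; omega)
  constructor
  · rintro ⟨-, hM⟩
    have hMX X hX : M * X = 0 := (hM X hX).1
    have hXM X hX : X * M = 0 := (hM X hX).2
    refine ⟨M last first, fun y hy => ⟨apply_mul_eq_zero_of_mul_eq_zero hMX _ _ hy,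
      mul_apply_eq_zero_of_mul_eq_zero hXM _ _ hy⟩, ?_⟩
    refine Matrix.eq_single_of_apply_eq_zero (fun i j hi => ?_) (fun i j hj => ?_)
    · exact row_eq_zero_of_mul_eq_zero hXM (lt_of_le_of_ne (le_last i) hi) j
    · exact col_eq_zero_of_mul_eq_zero hMX i (lt_of_le_of_ne (first_le j) (Ne.symm hj))
  · rintro ⟨a, ha, rfl⟩
    exact ⟨rmem_single_iff.2 fun h => absurd h (not_le.2 first_lt_last), fun X hX =>
      ⟨single_mul_eq_zero_of_rmem first_le (fun y hy => (ha y hy).1) hX,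
        mul_single_eq_zero_of_rmem le_last (fun y hy => (ha y hy).2) hX⟩⟩
end

section
/- Let α, β, γ : J → Ann_K(J) be additive maps satisfying α(J²) = β(J²) = γ(J²) = 0, α(yx) = xα(y), β(yx) = xβ(y), β(xy) = β(y)x, and γ(xy) = γ(y)x for all x ∈ K, y ∈ J. Then the map Γ̄ : R → R sending a matrix [a_{i,j}] to α(a_{1,n})e_{n−1,1} + β(a_{1,n})e_{n−1,2} + γ(a_{1,n})e_{n,2} − α(a_{1,n−1})e_{n,1} − β(a_{1,n−1})e_{n,2} − β(a_{2,n})e_{n−1,1} − γ(a_{2,n})e_{n,1} + β(a_{2,n−1})e_{n,1} is a Lie derivation of R. -/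
/-- A Lie derivation of `R = R_n(K,J)`. -/
def IsLieDerOn {K : Type*} [Ring K] {n : ℕ} (J : AddSubgroup K)
    (D : Matrix (Fin n) (Fin n) K → Matrix (Fin n) (Fin n) K) : Prop :=
  (∀ A, Rmem J A → Rmem J (D A)) ∧
  (∀ A B, Rmem J A → Rmem J B → D (A + B) = D A + D B) ∧
  (∀ A B, Rmem J A → Rmem J B →
    D (A * B - B * A) = (D A * B - B * D A) + (A * D B - D B * A))

open Matrix

section SpecialMap

variable {K : Type*} [Ring K] {ι : Type*} {J : AddSubgroup K} {A B : Matrix ι ι K}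
  {f₀ f₁ l₀ l₁ : ι} {φ : K →+ K}

def annihilator (J : AddSubgroup K) : AddSubgroup K where
  carrier := {c | ∀ z ∈ J, c * z = 0 ∧ z * c = 0}
  add_mem' ha hb z hz := by simp [add_mul, mul_add, ha z hz, hb z hz]
  zero_mem' := by simp
  neg_mem' ha z hz := by simp [ha z hz]

theorem map_commutator_apply_of_mem [Fintype ι]
    (hφ : ∀ y ∈ J, ∀ z ∈ J, φ (y * z) = 0) (i j : ι) (s : Finset ι)
    (h : ∀ k ∉ s, A i k ∈ J ∧ B k j ∈ J ∧ B i k ∈ J ∧ A k j ∈ J) :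
    φ ((A * B - B * A) i j) = ∑ k ∈ s, (φ (A i k * B k j) - φ (B i k * A k j)) := by
  have hC : (A * B - B * A) i j = ∑ k, (A i k * B k j - B i k * A k j) := by
    simp only [Matrix.sub_apply, mul_apply, Finset.sum_sub_distrib]
  rw [hC, map_sum]
  simp only [map_sub]
  refine (Finset.sum_subset (Finset.subset_univ s) fun k _ hk => ?_).symm
  obtain ⟨h₁, h₂, h₃, h₄⟩ := h k hk
  rw [hφ _ h₁ _ h₂, hφ _ h₃ _ h₄, sub_zero]

/-- The part of the shape of a matrix of `R_n(K,J)` that the argument uses, for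
`f₀, f₁, l₀, l₁ = 0, 1, n-2, n-1`. -/
structure OuterLinesMem (J : AddSubgroup K) (f₀ f₁ l₀ l₁ : ι) (M : Matrix ι ι K) : Prop where
  row₀ : ∀ k, M f₀ k ∈ J
  row₁ : ∀ k, k ≠ f₀ → M f₁ k ∈ J
  col₁ : ∀ k, M k l₁ ∈ J
  col₀ : ∀ k, k ≠ l₁ → M k l₀ ∈ J

theorem map_commutator_apply_first_last [Fintype ι] (hφ : ∀ y ∈ J, ∀ z ∈ J, φ (y * z) = 0)
    (hA : OuterLinesMem J f₀ f₁ l₀ l₁ A) (hB : OuterLinesMem J f₀ f₁ l₀ l₁ B) :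
    φ ((A * B - B * A) f₀ l₁) = 0 := by
  rw [map_commutator_apply_of_mem hφ f₀ l₁ ∅
    fun k _ => ⟨hA.row₀ k, hB.col₁ k, hB.row₀ k, hA.col₁ k⟩, Finset.sum_empty]

theorem map_commutator_apply_first_penult [Fintype ι] (hφ : ∀ y ∈ J, ∀ z ∈ J, φ (y * z) = 0)
    (hφr : ∀ x, ∀ y ∈ J, φ (y * x) = x * φ y)
    (hA : OuterLinesMem J f₀ f₁ l₀ l₁ A) (hB : OuterLinesMem J f₀ f₁ l₀ l₁ B) :
    φ ((A * B - B * A) f₀ l₀) = B l₁ l₀ * φ (A f₀ l₁) - A l₁ l₀ * φ (B f₀ l₁) := by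
  rw [map_commutator_apply_of_mem hφ f₀ l₀ {l₁} fun k hk =>
      ⟨hA.row₀ k, hB.col₀ k (by simpa using hk), hB.row₀ k, hA.col₀ k (by simpa using hk)⟩,
    Finset.sum_singleton, hφr _ _ (hA.row₀ l₁), hφr _ _ (hB.row₀ l₁)]

theorem map_commutator_apply_second_last [Fintype ι] (hφ : ∀ y ∈ J, ∀ z ∈ J, φ (y * z) = 0)
    (hφl : ∀ x, ∀ y ∈ J, φ (x * y) = φ y * x)
    (hA : OuterLinesMem J f₀ f₁ l₀ l₁ A) (hB : OuterLinesMem J f₀ f₁ l₀ l₁ B) :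
    φ ((A * B - B * A) f₁ l₁) = φ (B f₀ l₁) * A f₁ f₀ - φ (A f₀ l₁) * B f₁ f₀ := by
  rw [map_commutator_apply_of_mem hφ f₁ l₁ {f₀} fun k hk =>
      ⟨hA.row₁ k (by simpa using hk), hB.col₁ k, hB.row₁ k (by simpa using hk), hA.col₁ k⟩,
    Finset.sum_singleton, hφl _ _ (hB.row₀ l₁), hφl _ _ (hA.row₀ l₁)]

theorem map_commutator_apply_second_penult [DecidableEq ι] [Fintype ι]
    (hφ : ∀ y ∈ J, ∀ z ∈ J, φ (y * z) = 0)
    (hφr : ∀ x, ∀ y ∈ J, φ (y * x) = x * φ y) (hφl : ∀ x, ∀ y ∈ J, φ (x * y) = φ y * x)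
    (hf₀ : f₀ ≠ l₁) (hA : OuterLinesMem J f₀ f₁ l₀ l₁ A) (hB : OuterLinesMem J f₀ f₁ l₀ l₁ B) :
    φ ((A * B - B * A) f₁ l₀) =
      (φ (B f₀ l₀) * A f₁ f₀ - φ (A f₀ l₀) * B f₁ f₀) +
        (B l₁ l₀ * φ (A f₁ l₁) - A l₁ l₀ * φ (B f₁ l₁)) := by
  have hout : ∀ k ∉ ({f₀, l₁} : Finset ι), k ≠ f₀ ∧ k ≠ l₁ := by simp
  rw [map_commutator_apply_of_mem hφ f₁ l₀ {f₀, l₁} fun k hk =>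
      ⟨hA.row₁ k (hout k hk).1, hB.col₀ k (hout k hk).2, hB.row₁ k (hout k hk).1,
        hA.col₀ k (hout k hk).2⟩,
    Finset.sum_pair hf₀, hφl _ _ (hB.row₀ l₀), hφl _ _ (hA.row₀ l₀), hφr _ _ (hA.col₁ f₁),
    hφr _ _ (hB.col₁ f₁)]

variable [DecidableEq ι]

def cornerBlock (r r' c c' : ι) (p q s t : K) : Matrix ι ι K :=
  single r c p + single r c' q + single r' c s + single r' c' t

/-- `Γ̄` of the paper, with `f₀, f₁, l₀, l₁` in place of its indices `1, 2, n-1, n`. -/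
def specialMapII (α β γ : K →+ K) (f₀ f₁ l₀ l₁ : ι) (M : Matrix ι ι K) : Matrix ι ι K :=
  cornerBlock l₀ l₁ f₀ f₁ (α (M f₀ l₁) - β (M f₁ l₁)) (β (M f₀ l₁))
    (β (M f₁ l₀) - α (M f₀ l₀) - γ (M f₁ l₁)) (γ (M f₀ l₁) - β (M f₀ l₀))

variable {r r' c c' : ι} {α β γ : K →+ K}

theorem cornerBlock_add (p q s t p' q' s' t' : K) :
    cornerBlock r r' c c' p q s t + cornerBlock r r' c c' p' q' s' t' =
      cornerBlock r r' c c' (p + p') (q + q') (s + s') (t + t') := by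
  simp only [cornerBlock, single_add]
  abel

theorem cornerBlock_sub (p q s t p' q' s' t' : K) :
    cornerBlock r r' c c' p q s t - cornerBlock r r' c c' p' q' s' t' =
      cornerBlock r r' c c' (p - p') (q - q') (s - s') (t - t') := by
  simp only [cornerBlock, sub_eq_add_neg, single_add, ← single_neg]
  abel

theorem specialMapII_add :
    specialMapII α β γ f₀ f₁ l₀ l₁ (A + B) =
      specialMapII α β γ f₀ f₁ l₀ l₁ A + specialMapII α β γ f₀ f₁ l₀ l₁ B := by
  rw [specialMapII, specialMapII, specialMapII, cornerBlock_add]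
  congr 1 <;> simp only [Matrix.add_apply, map_add] <;> abel

variable [Fintype ι]

theorem single_mul_eq_single_of_mem {i j j' : ι} {c : K}
    (hc : ∀ z ∈ J, c * z = 0) (hB : ∀ k, k ≠ j' → B j k ∈ J) :
    single i j c * B = single i j' (c * B j j') := by
  ext a b
  obtain rfl | ha := eq_or_ne a i
  · obtain rfl | hb := eq_or_ne b j'
    · simp
    · simp [hc _ (hB b hb), Ne.symm hb]
  · simp [ha, Ne.symm ha]

theorem mul_single_eq_single_of_mem {i i' j : ι} {c : K}
    (hc : ∀ z ∈ J, z * c = 0) (hB : ∀ k, k ≠ i' → B k i ∈ J) :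
    B * single i j c = single i' j (B i' i * c) := by
  ext a b
  obtain rfl | hb := eq_or_ne b j
  · obtain rfl | ha := eq_or_ne a i'
    · simp
    · simp [hc _ (hB a ha), Ne.symm ha]
  · simp [hb, Ne.symm hb]

theorem single_mul_eq_zero_of_mem {i j : ι} {c : K}
    (hc : ∀ z ∈ J, c * z = 0) (hB : ∀ k, B j k ∈ J) : single i j c * B = 0 := by
  rw [single_mul_eq_single_of_mem hc (fun k _ => hB k), hc _ (hB j), single_zero]

theorem mul_single_eq_zero_of_mem {i j : ι} {c : K}
    (hc : ∀ z ∈ J, z * c = 0) (hB : ∀ k, B k i ∈ J) : B * single i j c = 0 := by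
  rw [mul_single_eq_single_of_mem hc (fun k _ => hB k), hc _ (hB i), single_zero]

theorem cornerBlock_mul {p q s t : K}
    (hp : p ∈ annihilator J) (hq : q ∈ annihilator J) (hs : s ∈ annihilator J)
    (ht : t ∈ annihilator J) (hB : ∀ k, B c k ∈ J) (hB' : ∀ k, k ≠ c → B c' k ∈ J) :
    cornerBlock r r' c c' p q s t * B =
      cornerBlock r r' c c' (q * B c' c) 0 (t * B c' c) 0 := by
  simp only [cornerBlock, add_mul, single_zero, add_zero, zero_add,
    single_mul_eq_zero_of_mem (fun z hz => (hp z hz).1) hB,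
    single_mul_eq_zero_of_mem (fun z hz => (hs z hz).1) hB,
    single_mul_eq_single_of_mem (fun z hz => (hq z hz).1) hB',
    single_mul_eq_single_of_mem (fun z hz => (ht z hz).1) hB']

theorem mul_cornerBlock {p q s t : K}
    (hp : p ∈ annihilator J) (hq : q ∈ annihilator J) (hs : s ∈ annihilator J)
    (ht : t ∈ annihilator J) (hB : ∀ k, B k r' ∈ J) (hB' : ∀ k, k ≠ r' → B k r ∈ J) :
    B * cornerBlock r r' c c' p q s t =
      cornerBlock r r' c c' 0 0 (B r' r * p) (B r' r * q) := by
  simp only [cornerBlock, mul_add, single_zero, add_zero, zero_add,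
    mul_single_eq_zero_of_mem (fun z hz => (hs z hz).2) hB,
    mul_single_eq_zero_of_mem (fun z hz => (ht z hz).2) hB,
    mul_single_eq_single_of_mem (fun z hz => (hp z hz).2) hB',
    mul_single_eq_single_of_mem (fun z hz => (hq z hz).2) hB']

theorem specialMapII_mul (hαA : ∀ y ∈ J, α y ∈ annihilator J)
    (hβA : ∀ y ∈ J, β y ∈ annihilator J) (hγA : ∀ y ∈ J, γ y ∈ annihilator J)
    (hl₀ : l₀ ≠ f₀) (hA : OuterLinesMem J f₀ f₁ l₀ l₁ A) (hB : OuterLinesMem J f₀ f₁ l₀ l₁ B) :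
    specialMapII α β γ f₀ f₁ l₀ l₁ A * B =
      cornerBlock l₀ l₁ f₀ f₁ (β (A f₀ l₁) * B f₁ f₀) 0
        ((γ (A f₀ l₁) - β (A f₀ l₀)) * B f₁ f₀) 0 := by
  have ha := hA.row₀ l₁
  have hb := hA.row₀ l₀
  have hc := hA.col₁ f₁
  have hd := hA.row₁ l₀ hl₀
  exact cornerBlock_mul (sub_mem (hαA _ ha) (hβA _ hc)) (hβA _ ha)
    (sub_mem (sub_mem (hβA _ hd) (hαA _ hb)) (hγA _ hc)) (sub_mem (hγA _ ha) (hβA _ hb))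
    hB.row₀ hB.row₁

theorem mul_specialMapII (hαA : ∀ y ∈ J, α y ∈ annihilator J)
    (hβA : ∀ y ∈ J, β y ∈ annihilator J) (hγA : ∀ y ∈ J, γ y ∈ annihilator J)
    (hl₀ : l₀ ≠ f₀) (hA : OuterLinesMem J f₀ f₁ l₀ l₁ A) (hB : OuterLinesMem J f₀ f₁ l₀ l₁ B) :
    B * specialMapII α β γ f₀ f₁ l₀ l₁ A =
      cornerBlock l₀ l₁ f₀ f₁ 0 0 (B l₁ l₀ * (α (A f₀ l₁) - β (A f₁ l₁)))
        (B l₁ l₀ * β (A f₀ l₁)) := by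
  have ha := hA.row₀ l₁
  have hb := hA.row₀ l₀
  have hc := hA.col₁ f₁
  have hd := hA.row₁ l₀ hl₀
  exact mul_cornerBlock (sub_mem (hαA _ ha) (hβA _ hc)) (hβA _ ha)
    (sub_mem (sub_mem (hβA _ hd) (hαA _ hb)) (hγA _ hc)) (sub_mem (hγA _ ha) (hβA _ hb))
    hB.col₁ hB.col₀

theorem specialMapII_commutator (hf₀ : f₀ ≠ l₁) (hl₀ : l₀ ≠ f₀)
    (hαA : ∀ y ∈ J, α y ∈ annihilator J) (hβA : ∀ y ∈ J, β y ∈ annihilator J)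
    (hγA : ∀ y ∈ J, γ y ∈ annihilator J)
    (hα2 : ∀ y ∈ J, ∀ z ∈ J, α (y * z) = 0) (hβ2 : ∀ y ∈ J, ∀ z ∈ J, β (y * z) = 0)
    (hγ2 : ∀ y ∈ J, ∀ z ∈ J, γ (y * z) = 0)
    (hα : ∀ x, ∀ y ∈ J, α (y * x) = x * α y) (hβl : ∀ x, ∀ y ∈ J, β (y * x) = x * β y)
    (hβr : ∀ x, ∀ y ∈ J, β (x * y) = β y * x) (hγ : ∀ x, ∀ y ∈ J, γ (x * y) = γ y * x)
    (hA : OuterLinesMem J f₀ f₁ l₀ l₁ A) (hB : OuterLinesMem J f₀ f₁ l₀ l₁ B) :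
    let Γ := specialMapII α β γ f₀ f₁ l₀ l₁
    Γ (A * B - B * A) = (Γ A * B - B * Γ A) + (A * Γ B - Γ B * A) := by
  dsimp only
  rw [specialMapII_mul hαA hβA hγA hl₀ hA hB, mul_specialMapII hαA hβA hγA hl₀ hA hB,
    specialMapII_mul hαA hβA hγA hl₀ hB hA, mul_specialMapII hαA hβA hγA hl₀ hB hA,
    cornerBlock_sub, cornerBlock_sub, cornerBlock_add, specialMapII,
    map_commutator_apply_first_last hα2 hA hB, map_commutator_apply_first_last hβ2 hA hB,
    map_commutator_apply_first_last hγ2 hA hB, map_commutator_apply_first_penult hα2 hα hA hB,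
    map_commutator_apply_first_penult hβ2 hβl hA hB,
    map_commutator_apply_second_last hβ2 hβr hA hB, map_commutator_apply_second_last hγ2 hγ hA hB,
    map_commutator_apply_second_penult hβ2 hβl hβr hf₀ hA hB]
  congr 1 <;> noncomm_ring

end SpecialMap

section TriangularMatrixRing

variable {K : Type*} [Ring K] {J : AddSubgroup K} {n : ℕ}

theorem Rmem.outerLinesMem (hn : 2 ≤ n) {M : Matrix (Fin n) (Fin n) K} (hM : Rmem J M) :
    OuterLinesMem J ⟨0, by omega⟩ ⟨1, by omega⟩ ⟨n - 2, by omega⟩ ⟨n - 1, by omega⟩ M where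
  row₀ k := hM _ _ (Fin.le_def.2 k.val.zero_le)
  row₁ k hk := hM _ _ (Fin.le_def.2 (Nat.one_le_iff_ne_zero.2 fun h => hk (Fin.ext h)))
  col₁ k := hM _ _ (Fin.le_def.2 (Nat.le_sub_one_of_lt k.2))
  col₀ k hk := hM _ _ (Fin.le_def.2 (by grind))

theorem rmem_cornerBlock {r r' c c' : Fin n} (h : max c c' < min r r') (p q s t : K) :
    Rmem J (cornerBlock r r' c c' p q s t) := by
  intro i j hij
  have below : ∀ a b (x : K), b < a → single a b x i j = 0 := fun a b x hab =>
    single_apply_of_ne _ _ _ _ _ fun ⟨hai, hbj⟩ => (hai ▸ hbj ▸ hab).not_ge hij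
  simp only [max_lt_iff, lt_min_iff] at h
  simp only [cornerBlock, Matrix.add_apply, below _ _ _ h.1.1, below _ _ _ h.1.2,
    below _ _ _ h.2.1, below _ _ _ h.2.2, add_zero, J.zero_mem]

theorem isLieDerOn_specialMapII {f₀ f₁ l₀ l₁ : Fin n}
    (hR : ∀ M, Rmem J M → OuterLinesMem J f₀ f₁ l₀ l₁ M) (hlow : max f₀ f₁ < min l₀ l₁)
    {α β γ : K →+ K}
    (hαA : ∀ y ∈ J, α y ∈ annihilator J) (hβA : ∀ y ∈ J, β y ∈ annihilator J)
    (hγA : ∀ y ∈ J, γ y ∈ annihilator J)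
    (hα2 : ∀ y ∈ J, ∀ z ∈ J, α (y * z) = 0) (hβ2 : ∀ y ∈ J, ∀ z ∈ J, β (y * z) = 0)
    (hγ2 : ∀ y ∈ J, ∀ z ∈ J, γ (y * z) = 0)
    (hα : ∀ x, ∀ y ∈ J, α (y * x) = x * α y) (hβl : ∀ x, ∀ y ∈ J, β (y * x) = x * β y)
    (hβr : ∀ x, ∀ y ∈ J, β (x * y) = β y * x) (hγ : ∀ x, ∀ y ∈ J, γ (x * y) = γ y * x) :
    IsLieDerOn J (specialMapII α β γ f₀ f₁ l₀ l₁) := by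
  have hf₀ : f₀ < min l₀ l₁ := (le_max_left _ _).trans_lt hlow
  exact ⟨fun A _ => rmem_cornerBlock hlow _ _ _ _, fun A B _ _ => specialMapII_add,
    fun A B hA hB => specialMapII_commutator (hf₀.trans_le (min_le_right _ _)).ne
      (hf₀.trans_le (min_le_left _ _)).ne' hαA hβA hγA hα2 hβ2 hγ2 hα hβl hβr hγ (hR A hA)
      (hR B hB)⟩

end TriangularMatrixRing

/-- The special map of type II is a Lie derivation of `R` (`n ≥ 4`). -/
theorem special_lie_derivation_type_II {K : Type*} [Ring K] {n : ℕ} (hn : 4 ≤ n)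
    (J : AddSubgroup K)
    (α β γ : K →+ K)
    (hαA : ∀ y ∈ J, ∀ z ∈ J, α y * z = 0 ∧ z * α y = 0)
    (hβA : ∀ y ∈ J, ∀ z ∈ J, β y * z = 0 ∧ z * β y = 0)
    (hγA : ∀ y ∈ J, ∀ z ∈ J, γ y * z = 0 ∧ z * γ y = 0)
    (hα2 : ∀ y ∈ J, ∀ z ∈ J, α (y * z) = 0)
    (hβ2 : ∀ y ∈ J, ∀ z ∈ J, β (y * z) = 0)
    (hγ2 : ∀ y ∈ J, ∀ z ∈ J, γ (y * z) = 0)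
    (hα : ∀ x : K, ∀ y ∈ J, α (y * x) = x * α y)
    (hβl : ∀ x : K, ∀ y ∈ J, β (y * x) = x * β y)
    (hβr : ∀ x : K, ∀ y ∈ J, β (x * y) = β y * x)
    (hγ : ∀ x : K, ∀ y ∈ J, γ (x * y) = γ y * x) :
    IsLieDerOn J (fun M : Matrix (Fin n) (Fin n) K =>
      Matrix.single ⟨n - 2, by omega⟩ ⟨0, by omega⟩ (α (M ⟨0, by omega⟩ ⟨n - 1, by omega⟩)) +
      Matrix.single ⟨n - 2, by omega⟩ ⟨1, by omega⟩ (β (M ⟨0, by omega⟩ ⟨n - 1, by omega⟩)) +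
      Matrix.single ⟨n - 1, by omega⟩ ⟨1, by omega⟩ (γ (M ⟨0, by omega⟩ ⟨n - 1, by omega⟩)) -
      Matrix.single ⟨n - 1, by omega⟩ ⟨0, by omega⟩ (α (M ⟨0, by omega⟩ ⟨n - 2, by omega⟩)) -
      Matrix.single ⟨n - 1, by omega⟩ ⟨1, by omega⟩ (β (M ⟨0, by omega⟩ ⟨n - 2, by omega⟩)) -
      Matrix.single ⟨n - 2, by omega⟩ ⟨0, by omega⟩ (β (M ⟨1, by omega⟩ ⟨n - 1, by omega⟩)) -
      Matrix.single ⟨n - 1, by omega⟩ ⟨0, by omega⟩ (γ (M ⟨1, by omega⟩ ⟨n - 1, by omega⟩)) +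
      Matrix.single ⟨n - 1, by omega⟩ ⟨0, by omega⟩ (β (M ⟨1, by omega⟩ ⟨n - 2, by omega⟩))) := by
  convert isLieDerOn_specialMapII (fun _ => Rmem.outerLinesMem (by omega : 2 ≤ n)) ?_
    hαA hβA hγA hα2 hβ2 hγ2 hα hβl hβr hγ using 1
  · funext M
    simp only [specialMapII, cornerBlock, sub_eq_add_neg, single_add, ← single_neg]
    abel
  · simp only [max_lt_iff, lt_min_iff, Fin.mk_lt_mk]
    omega
end

section
/- Let α, γ : J → Ann_K(J) be additive maps satisfying α(J²) = γ(J²) = 0, α(yx) = xα(y), and γ(xy) = γ(y)x for all x ∈ K, y ∈ J. Then the map Λ : R_3(K,J) → R_3(K,J) sending [a_{i,j}] to α(a_{1,3})e_{2,1} + γ(a_{1,3})e_{3,2} − α(a_{1,2})e_{3,1} − γ(a_{2,3})e_{3,1} is a Lie derivation of R_3(K,J). -/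
/-!
`Λ` takes values in the strictly lower triangular matrices with entries in `Ann_K(J)`, and the
bracket of `u e₂₁ + v e₃₂ + w e₃₁` (with `u, v, w ∈ Ann_K(J)`) with any `B ∈ R₃(K,J)` collapses
to `(v b₂₁ - b₃₂ u) e₃₁`. On the other side, `α` and `γ` vanish on `J²` (because `α(yz) = z α(y)`,
`γ(yz) = γ(z) y`), so `Λ` kills the `(1,3)` entry of `[A,B]`, and in the `(1,2)` resp. `(2,3)`
entry only the products `a₁₃b₃₂, b₁₃a₃₂` resp. `a₂₁b₁₃, b₂₁a₁₃` survive. Both sides are then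
`(γ(a₁₃)b₂₁ - b₃₂α(a₁₃) - γ(b₁₃)a₂₁ + a₃₂α(b₁₃)) e₃₁`.
-/

open Matrix

section

variable {K : Type*} [Ring K] {J : AddSubgroup K}

def twoSidedAnnihilator (J : AddSubgroup K) : AddSubgroup K where
  carrier := {a | ∀ z ∈ J, a * z = 0 ∧ z * a = 0}
  add_mem' {a b} ha hb z hz := by
    simp [add_mul, mul_add, (ha z hz).1, (ha z hz).2, (hb z hz).1, (hb z hz).2]
  zero_mem' z _ := ⟨zero_mul z, mul_zero z⟩
  neg_mem' {a} ha z hz := by simp [(ha z hz).1, (ha z hz).2]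

theorem map_mul_eq_zero_of_map_mul_eq_mul_map {f : K →+ K}
    (hf : ∀ x : K, ∀ y ∈ J, f (y * x) = x * f y)
    (hfJ : ∀ y ∈ J, f y ∈ twoSidedAnnihilator J) {y z : K} (hy : y ∈ J) (hz : z ∈ J) :
    f (y * z) = 0 := by
  rw [hf z y hy]
  exact (hfJ y hy z hz).2

theorem map_mul_eq_zero_of_map_mul_eq_map_mul {f : K →+ K}
    (hf : ∀ x : K, ∀ y ∈ J, f (x * y) = f y * x)
    (hfJ : ∀ y ∈ J, f y ∈ twoSidedAnnihilator J) {y z : K} (hy : y ∈ J) (hz : z ∈ J) :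
    f (y * z) = 0 := by
  rw [hf y z hz]
  exact (hfJ z hz y hy).1

variable {A B : Matrix (Fin 3) (Fin 3) K}

theorem map_commutator_apply_zero_two {f : K →+ K}
    (hf : ∀ y ∈ J, ∀ z ∈ J, f (y * z) = 0) (hA : Rmem J A) (hB : Rmem J B) :
    f ((A * B - B * A) 0 2) = 0 := by
  simp [Matrix.sub_apply, mul_apply, Fin.sum_univ_three, hf, hA _ _, hB _ _]

theorem map_commutator_apply_zero_one {α : K →+ K}
    (hα : ∀ x : K, ∀ y ∈ J, α (y * x) = x * α y)
    (hαJ : ∀ y ∈ J, α y ∈ twoSidedAnnihilator J) (hA : Rmem J A) (hB : Rmem J B) :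
    α ((A * B - B * A) 0 1) = B 2 1 * α (A 0 2) - A 2 1 * α (B 0 2) := by
  have hann : ∀ y ∈ J, ∀ z ∈ J, z * α y = 0 := fun y hy z hz => (hαJ y hy z hz).2
  simp [Matrix.sub_apply, mul_apply, Fin.sum_univ_three, hα, hann, hA _ _, hB _ _]

theorem map_commutator_apply_one_two {γ : K →+ K}
    (hγ : ∀ x : K, ∀ y ∈ J, γ (x * y) = γ y * x)
    (hγJ : ∀ y ∈ J, γ y ∈ twoSidedAnnihilator J) (hA : Rmem J A) (hB : Rmem J B) :
    γ ((A * B - B * A) 1 2) = γ (B 0 2) * A 1 0 - γ (A 0 2) * B 1 0 := by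
  have hann : ∀ y ∈ J, ∀ z ∈ J, γ y * z = 0 := fun y hy z hz => (hγJ y hy z hz).1
  simp [Matrix.sub_apply, mul_apply, Fin.sum_univ_three, hγ, hann, hA _ _, hB _ _]

theorem commutator_eq_single_of_mem_twoSidedAnnihilator {u v w : K}
    (hu : u ∈ twoSidedAnnihilator J) (hv : v ∈ twoSidedAnnihilator J)
    (hw : w ∈ twoSidedAnnihilator J) (hB : Rmem J B) :
    (single 1 0 u + single 2 1 v + single 2 0 w) * B -
        B * (single 1 0 u + single 2 1 v + single 2 0 w) =
      single 2 0 (v * B 1 0 - B 2 1 * u) := by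
  have hl : ∀ a ∈ twoSidedAnnihilator J, ∀ z ∈ J, a * z = 0 := fun a ha z hz => (ha z hz).1
  have hr : ∀ a ∈ twoSidedAnnihilator J, ∀ z ∈ J, z * a = 0 := fun a ha z hz => (ha z hz).2
  ext i j
  fin_cases i <;> fin_cases j <;>
    simp [Matrix.sub_apply, mul_apply, Fin.sum_univ_three, single_apply, hl, hr, hu, hv, hw, hB _ _]

def typeIIIMap (α γ : K →+ K) (M : Matrix (Fin 3) (Fin 3) K) : Matrix (Fin 3) (Fin 3) K :=
  single 1 0 (α (M 0 2)) + single 2 1 (γ (M 0 2)) -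
    single 2 0 (α (M 0 1)) - single 2 0 (γ (M 1 2))

variable {α γ : K →+ K}

theorem typeIIIMap_eq (M : Matrix (Fin 3) (Fin 3) K) :
    typeIIIMap α γ M = single 1 0 (α (M 0 2)) + single 2 1 (γ (M 0 2)) +
      single 2 0 (-(α (M 0 1) + γ (M 1 2))) := by
  simp only [typeIIIMap, neg_add, single_add, ← single_neg]
  abel

theorem rmem_typeIIIMap (M : Matrix (Fin 3) (Fin 3) K) : Rmem J (typeIIIMap α γ M) := by
  intro i j hij
  fin_cases i <;> fin_cases j <;> simp_all [typeIIIMap]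

theorem typeIIIMap_add (A B : Matrix (Fin 3) (Fin 3) K) :
    typeIIIMap α γ (A + B) = typeIIIMap α γ A + typeIIIMap α γ B := by
  simp only [typeIIIMap, Matrix.add_apply, map_add, single_add]
  abel

theorem typeIIIMap_commutator
    (hα : ∀ x : K, ∀ y ∈ J, α (y * x) = x * α y) (hγ : ∀ x : K, ∀ y ∈ J, γ (x * y) = γ y * x)
    (hαJ : ∀ y ∈ J, α y ∈ twoSidedAnnihilator J) (hγJ : ∀ y ∈ J, γ y ∈ twoSidedAnnihilator J)
    (hA : Rmem J A) (hB : Rmem J B) :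
    typeIIIMap α γ (A * B - B * A) =
      (typeIIIMap α γ A * B - B * typeIIIMap α γ A) +
        (A * typeIIIMap α γ B - typeIIIMap α γ B * A) := by
  have hαJJ : ∀ y ∈ J, ∀ z ∈ J, α (y * z) = 0 := fun y hy z hz =>
    map_mul_eq_zero_of_map_mul_eq_mul_map hα hαJ hy hz
  have hγJJ : ∀ y ∈ J, ∀ z ∈ J, γ (y * z) = 0 := fun y hy z hz =>
    map_mul_eq_zero_of_map_mul_eq_map_mul hγ hγJ hy hz
  have hwJ : ∀ M : Matrix (Fin 3) (Fin 3) K, Rmem J M →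
      -(α (M 0 1) + γ (M 1 2)) ∈ twoSidedAnnihilator J := fun M hM =>
    neg_mem (add_mem (hαJ _ (hM 0 1 (by decide))) (hγJ _ (hM 1 2 (by decide))))
  have hA02 := hA 0 2 (by decide)
  have hB02 := hB 0 2 (by decide)
  rw [← neg_sub (typeIIIMap α γ B * A), typeIIIMap, map_commutator_apply_zero_two hαJJ hA hB,
    map_commutator_apply_zero_two hγJJ hA hB, map_commutator_apply_zero_one hα hαJ hA hB,
    map_commutator_apply_one_two hγ hγJ hA hB, typeIIIMap_eq A, typeIIIMap_eq B,
    commutator_eq_single_of_mem_twoSidedAnnihilator (hαJ _ hA02) (hγJ _ hA02) (hwJ A hA) hB,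
    commutator_eq_single_of_mem_twoSidedAnnihilator (hαJ _ hB02) (hγJ _ hB02) (hwJ B hB) hA]
  simp only [single_zero, add_zero, zero_add, sub_eq_add_neg, single_neg, ← single_add]
  congr 1
  abel

end

theorem special_lie_derivation_type_III_general {K : Type*} [Ring K]
    (J : AddSubgroup K)
    (α γ : K →+ K)
    (hαA : ∀ y ∈ J, ∀ z ∈ J, α y * z = 0 ∧ z * α y = 0)
    (hγA : ∀ y ∈ J, ∀ z ∈ J, γ y * z = 0 ∧ z * γ y = 0)
    (hα : ∀ x : K, ∀ y ∈ J, α (y * x) = x * α y)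
    (hγ : ∀ x : K, ∀ y ∈ J, γ (x * y) = γ y * x) :
    IsLieDerOn J (fun M : Matrix (Fin 3) (Fin 3) K =>
      Matrix.single 1 0 (α (M 0 2)) + Matrix.single 2 1 (γ (M 0 2)) -
      Matrix.single 2 0 (α (M 0 1)) - Matrix.single 2 0 (γ (M 1 2))) :=
  ⟨fun A _ => rmem_typeIIIMap A, fun A B _ _ => typeIIIMap_add A B,
    fun _ _ hA hB => typeIIIMap_commutator hα hγ hαA hγA hA hB⟩

/-- The special map of type III,
`[a_{i,j}] ↦ α(a_{1,3})e_{2,1} + γ(a_{1,3})e_{3,2} − α(a_{1,2})e_{3,1} − γ(a_{2,3})e_{3,1}`,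
is a Lie derivation of `R_3(K,J)`. -/
theorem special_lie_derivation_type_III {K : Type*} [Ring K]
    (h2 : ∀ a : K, a + a = 0 → a = 0)
    (J : AddSubgroup K)
    (hJl : ∀ r : K, ∀ y ∈ J, r * y ∈ J) (hJr : ∀ r : K, ∀ y ∈ J, y * r ∈ J)
    (α γ : K →+ K)
    (hαA : ∀ y ∈ J, ∀ z ∈ J, α y * z = 0 ∧ z * α y = 0)
    (hγA : ∀ y ∈ J, ∀ z ∈ J, γ y * z = 0 ∧ z * γ y = 0)
    (hα2 : ∀ y ∈ J, ∀ z ∈ J, α (y * z) = 0)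
    (hγ2 : ∀ y ∈ J, ∀ z ∈ J, γ (y * z) = 0)
    (hα : ∀ x : K, ∀ y ∈ J, α (y * x) = x * α y)
    (hγ : ∀ x : K, ∀ y ∈ J, γ (x * y) = γ y * x) :
    IsLieDerOn J (fun M : Matrix (Fin 3) (Fin 3) K =>
      Matrix.single 1 0 (α (M 0 2)) + Matrix.single 2 1 (γ (M 0 2)) -
      Matrix.single 2 0 (α (M 0 1)) - Matrix.single 2 0 (γ (M 1 2))) :=
  special_lie_derivation_type_III_general J α γ hαA hγA hα hγ
end
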